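/- arXiv:1803.01401 — 4 statements merged into one kernel-verified Lean document; each statement's English description precedes it below -/
import Mathlib

section
/- Let {a_k}, {b_k}, {c_k} be sequences of non-negative real numbers such that a_{k+1} ≤ a_k − b_k + c_k for all k ≥ 0, and ∑_{k=0}^∞ c_k < ∞. Then lim_{k→∞} a_k exists (is a finite real number) and ∑_{k=0}^∞ b_k < ∞. -/
/-- Deterministic Robbins–Siegmund lemma: if nonnegative real sequences satisfy
`a (k+1) ≤ a k - b k + c k` and `∑ c k < ∞`, then `lim a k` exists and `∑ b k < ∞`. -/
theorem robbins_siegmund (a b c : ℕ → ℝ)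
    (ha : ∀ k, 0 ≤ a k) (hb : ∀ k, 0 ≤ b k) (hc : ∀ k, 0 ≤ c k)
    (hrec : ∀ k, a (k + 1) ≤ a k - b k + c k)
    (hsum : Summable c) :
    (∃ l : ℝ, Filter.Tendsto a Filter.atTop (nhds l)) ∧ Summable b := by
  have key : ∀ n, a n + ∑ k ∈ Finset.range n, b k ≤ a 0 + ∑ k ∈ Finset.range n, c k := by
    intro n
    induction n with
    | zero => simp
    | succ n ih =>
      rw [Finset.sum_range_succ, Finset.sum_range_succ]
      have := hrec n
      linarith
  have hsumb : Summable b := by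
    apply summable_of_sum_range_le hb (c := a 0 + ∑' k, c k)
    intro n
    have h1 := key n
    have h2 : ∑ k ∈ Finset.range n, c k ≤ ∑' k, c k :=
      Summable.sum_le_tsum _ (fun i _ => hc i) hsum
    have := ha n
    linarith
  refine ⟨?_, hsumb⟩
  set f : ℕ → ℝ := fun n => a n - ∑ k ∈ Finset.range n, (c k - b k) with hf
  have hanti : Antitone f := by
    apply antitone_nat_of_succ_le
    intro n
    simp only [hf, Finset.sum_range_succ]
    have := hrec n
    linarith
  have hbdd : ∀ n, -(∑' k, c k) ≤ f n := by
    intro n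
    have h1 : ∑ k ∈ Finset.range n, (c k - b k) ≤ ∑ k ∈ Finset.range n, c k := by
      apply Finset.sum_le_sum
      intro i _
      have := hb i; linarith
    have h2 : ∑ k ∈ Finset.range n, c k ≤ ∑' k, c k :=
      Summable.sum_le_tsum _ (fun i _ => hc i) hsum
    have := ha n
    simp only [hf]
    linarith
  obtain ⟨L, hL⟩ := tendsto_of_antitone hanti |>.resolve_left (by
    intro h
    obtain ⟨n, hn⟩ := (Filter.tendsto_atBot.mp h (-(∑' k, c k) - 1)).exists
    have := hbdd n
    linarith)
  have hS : Filter.Tendsto (fun n => ∑ k ∈ Finset.range n, (c k - b k))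
      Filter.atTop (nhds (∑' k, (c k - b k))) :=
    (hsum.sub hsumb).hasSum.tendsto_sum_nat
  refine ⟨L + ∑' k, (c k - b k), ?_⟩
  have : a = fun n => f n + ∑ k ∈ Finset.range n, (c k - b k) := by
    funext n; simp [hf]
  rw [this]
  exact hL.add hS
end

section
/- Let τ₀, σ₀ > 0 satisfy ((1−δ)/τ₀ − L_{xx})·(1/σ₀) ≥ L_{yx}²/c_α with L_{yy} = 0, where δ, c_α ≥ 0, c_α > 0. Let μ > 0, and define γ₀ = σ₀/τ₀, γ_{k+1} = γ_k(1+μτ_k), τ_{k+1} = τ_k√(γ_k/γ_{k+1}), σ_k = γ_kτ_k. Then for every k ≥ 0: (1−δ)/τ_k ≥ L_{xx} + (L_{yx}²/c_α)·σ_k. -/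
/-- Inductive preservation of the step-size condition under the accelerated APD update
(case `L_yy = 0`): if `((1-δ)/τ₀ - Lxx)(1/σ₀) ≥ L_yx²/c_α`, then
`(1-δ)/τ_k ≥ Lxx + (L_yx²/c_α) σ_k` for every `k`. -/
theorem apd_stepsize_condition_preserved (δ cα Lxx Lyx μ τ₀ σ₀ : ℝ)
    (hδ0 : 0 ≤ δ) (hcα : 0 < cα) (hLxx : 0 ≤ Lxx) (hμ : 0 < μ)
    (hτ₀ : 0 < τ₀) (hσ₀ : 0 < σ₀)
    (hinit : Lyx ^ 2 / cα ≤ ((1 - δ) / τ₀ - Lxx) * (1 / σ₀))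
    (γ τ σ : ℕ → ℝ)
    (hγ0 : γ 0 = σ₀ / τ₀) (hτ0 : τ 0 = τ₀)
    (hgrow : ∀ k, γ (k + 1) = γ k * (1 + μ * τ k))
    (hτrec : ∀ k, τ (k + 1) = τ k * Real.sqrt (γ k / γ (k + 1)))
    (hσ : ∀ k, σ k = γ k * τ k) :
    ∀ k : ℕ, Lxx + Lyx ^ 2 / cα * σ k ≤ (1 - δ) / τ k := by
  set C := Lyx ^ 2 / cα with hC
  have hC0 : 0 ≤ C := div_nonneg (sq_nonneg _) hcα.le
  -- main invariant
  have key : ∀ k : ℕ, 0 < γ k ∧ 0 < τ k ∧ τ k ≤ τ₀ ∧ γ k * τ k ^ 2 = σ₀ * τ₀ := by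
    intro k
    induction k with
    | zero =>
      refine ⟨by rw [hγ0]; positivity, by rw [hτ0]; exact hτ₀, by rw [hτ0], ?_⟩
      rw [hγ0, hτ0]; field_simp
    | succ k ih =>
      obtain ⟨hγ, hτ, hle, heq⟩ := ih
      have h1 : (0:ℝ) < 1 + μ * τ k := by positivity
      have hγ' : 0 < γ (k + 1) := by rw [hgrow k]; positivity
      have hratio0 : 0 < γ k / γ (k + 1) := div_pos hγ hγ'
      have hratio1 : γ k / γ (k + 1) ≤ 1 := by
        rw [div_le_one hγ', hgrow k]
        nlinarith [mul_pos hγ (mul_pos hμ hτ)]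
      have hs0 : 0 < Real.sqrt (γ k / γ (k + 1)) := Real.sqrt_pos.mpr hratio0
      have hs1 : Real.sqrt (γ k / γ (k + 1)) ≤ 1 := by
        rw [show (1:ℝ) = Real.sqrt 1 by simp]
        exact Real.sqrt_le_sqrt hratio1
      have hτ' : 0 < τ (k + 1) := by rw [hτrec k]; positivity
      refine ⟨hγ', hτ', ?_, ?_⟩
      · rw [hτrec k]
        calc τ k * Real.sqrt (γ k / γ (k + 1)) ≤ τ k * 1 :=
              mul_le_mul_of_nonneg_left hs1 hτ.le
          _ = τ k := mul_one _
          _ ≤ τ₀ := hle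
      · rw [hτrec k, mul_pow, Real.sq_sqrt hratio0.le]
        field_simp
        linear_combination heq
  -- from init: C * (σ₀ * τ₀) ≤ (1 - δ) - Lxx * τ₀
  have hinit' : C * (σ₀ * τ₀) ≤ (1 - δ) - Lxx * τ₀ := by
    have h1 : C * σ₀ ≤ (1 - δ) / τ₀ - Lxx := by
      have := mul_le_mul_of_nonneg_right hinit hσ₀.le
      rwa [mul_assoc, one_div, inv_mul_cancel₀ hσ₀.ne', mul_one] at this
    have h2 : C * σ₀ * τ₀ ≤ ((1 - δ) / τ₀ - Lxx) * τ₀ :=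
      mul_le_mul_of_nonneg_right h1 hτ₀.le
    calc C * (σ₀ * τ₀) = C * σ₀ * τ₀ := by ring
      _ ≤ ((1 - δ) / τ₀ - Lxx) * τ₀ := h2
      _ = (1 - δ) - Lxx * τ₀ := by field_simp
  intro k
  obtain ⟨hγ, hτ, hle, heq⟩ := key k
  rw [le_div_iff₀ hτ]
  have hστ : σ k * τ k = σ₀ * τ₀ := by rw [hσ k]; nlinarith [heq]
  nlinarith [mul_le_mul_of_nonneg_left hle hLxx]
end

section
/- Let ρ: ℝⁿ → ℝ ∪ {∞} be proper convex, G: ℝⁿ → ℝᵐ, 𝒦 ⊆ ℝᵐ a closed convex cone, and q(y) = inf_x { ρ(x) + ⟨G(x), y⟩ } for y ∈ 𝒦* (q(y) = −∞ otherwise). Suppose x̄ is a Slater point, i.e., G(x̄) ∈ int(−𝒦), and let r* = min{ −⟨G(x̄), w⟩ : ‖w‖ = 1, w ∈ 𝒦* } > 0. Then for any ȳ ∈ dom q and any y ∈ 𝒦* with q(y) ≥ q(ȳ): ‖y‖ ≤ (ρ(x̄) − q(ȳ))/r*. -/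
open RealInnerProductSpace

/-- Dual superlevel-set boundedness for conic-constrained convex optimization:
if `xb` is a Slater point (`G(xb) ∈ int(-K)`), `r ≤ -⟨G(xb), w⟩` for all unit `w ∈ K*`
with `r > 0`, and `q` is the Lagrangian dual function (so `q y ≤ ρ x + ⟨G x, y⟩`),
then any `y ∈ K*` with `q y ≥ q yb` satisfies `‖y‖ ≤ (ρ xb - q yb)/r`. -/
theorem dual_superlevel_bounded {n m : ℕ}
    (ρ : EuclideanSpace ℝ (Fin n) → ℝ)
    (hρ : ConvexOn ℝ Set.univ ρ)
    (G : EuclideanSpace ℝ (Fin n) → EuclideanSpace ℝ (Fin m))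
    (K : Set (EuclideanSpace ℝ (Fin m)))
    (hKconv : Convex ℝ K) (hKclosed : IsClosed K)
    (hKcone : ∀ c : ℝ, 0 ≤ c → ∀ x ∈ K, c • x ∈ K)
    (xb : EuclideanSpace ℝ (Fin n))
    (hslater : G xb ∈ interior (-K))
    (r : ℝ) (hr : 0 < r)
    (hrmin : ∀ w ∈ {v | ∀ k ∈ K, 0 ≤ ⟪v, k⟫}, ‖w‖ = 1 → r ≤ -⟪G xb, w⟫)
    (q : EuclideanSpace ℝ (Fin m) → ℝ)
    (hq : ∀ y ∈ {v | ∀ k ∈ K, 0 ≤ ⟪v, k⟫},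
      ∀ x : EuclideanSpace ℝ (Fin n), q y ≤ ρ x + ⟪G x, y⟫) :
    ∀ yb ∈ {v | ∀ k ∈ K, 0 ≤ ⟪v, k⟫}, ∀ y ∈ {v | ∀ k ∈ K, 0 ≤ ⟪v, k⟫},
      q yb ≤ q y → ‖y‖ ≤ (ρ xb - q yb) / r := by
  intro yb hyb y hy hqq
  by_cases hy0 : y = 0
  · subst hy0
    simp only [norm_zero]
    apply div_nonneg _ hr.le
    have := hq 0 (by intro k _; simp) xb
    simp only [inner_zero_right, add_zero] at this
    linarith [hqq]
  · have hw : (‖y‖⁻¹ • y) ∈ {v | ∀ k ∈ K, 0 ≤ ⟪v, k⟫} := by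
      intro k hk
      rw [real_inner_smul_left]
      exact mul_nonneg (inv_nonneg.mpr (norm_nonneg y)) (hy k hk)
    have hnw : ‖(‖y‖⁻¹ • y)‖ = 1 := by
      rw [norm_smul]
      simp [norm_ne_zero_iff.mpr hy0, abs_of_nonneg (inv_nonneg.mpr (norm_nonneg y)),
        inv_mul_cancel₀ (norm_ne_zero_iff.mpr hy0)]
    have hrw := hrmin _ hw hnw
    rw [real_inner_smul_right] at hrw
    have hny : 0 < ‖y‖ := norm_pos_iff.mpr hy0
    have hGy : ⟪G xb, y⟫ ≤ -(r * ‖y‖) := by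
      have : r * ‖y‖ ≤ -⟪G xb, y⟫ := by
        have := mul_le_mul_of_nonneg_right hrw hny.le
        rw [neg_mul, mul_comm ‖y‖⁻¹, mul_assoc, inv_mul_cancel₀ hny.ne', mul_one] at this
        linarith
      linarith
    have hqy := hq y hy xb
    rw [le_div_iff₀ hr]
    linarith
end

section
/- Let μ = 0, let {τ_k, σ_k, θ_k} be the constant step-size sequence τ_k = τ₀, σ_k = σ₀, θ_k = 1, with t_k = 1, and suppose the per-iteration inequality L(x_{k+1}, y) − L(x, y_{k+1}) ≤ Q_k(z) − R_{k+1}(z) + E_k holds with E_k ≤ 0 and t_{k+1}Q_{k+1}(z) ≤ t_k R_{k+1}(z) for all k. Then for the ergodic averages x̄_K = (1/K)∑_{k=0}^{K−1} x_{k+1}, ȳ_K = (1/K)∑_{k=0}^{K−1} y_{k+1}, convexity of L(·, y) and concavity of L(x, ·) imply: L(x̄_K, y) − L(x, ȳ_K) ≤ (1/K)·[Q₀(z) − R_K(z)] ≤ (1/K)·[ (1/τ₀)D_𝒳(x, x₀) + (1/σ₀)D_𝒴(y, y₀) ]. -/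
/-- Telescoping plus Jensen for the ergodic rate of the constant step-size APD:
`L(x̄_K, y) - L(x, ȳ_K) ≤ (1/K)(Q 0 - R K) ≤ (1/K)((1/τ₀) D_X + (1/σ₀) D_Y)`. -/
theorem ergodic_telescoping_bound {X Y : Type*}
    [NormedAddCommGroup X] [NormedSpace ℝ X]
    [NormedAddCommGroup Y] [NormedSpace ℝ Y]
    (L : X → Y → ℝ) (x : X) (y : Y) (xs : ℕ → X) (ys : ℕ → Y)
    (Q R E : ℕ → ℝ) (τ₀ σ₀ DX DY : ℝ)
    (hτ₀ : 0 < τ₀) (hσ₀ : 0 < σ₀)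
    (hconv : ConvexOn ℝ Set.univ fun u => L u y)
    (hconc : ConcaveOn ℝ Set.univ fun v => L x v)
    (hiter : ∀ k, L (xs (k + 1)) y - L x (ys (k + 1)) ≤ Q k - R (k + 1) + E k)
    (hE : ∀ k, E k ≤ 0)
    (hQR : ∀ k, Q (k + 1) ≤ R (k + 1))
    (hQ0 : Q 0 = 1 / τ₀ * DX + 1 / σ₀ * DY)
    (K : ℕ) (hK : 1 ≤ K)
    (hRK : 0 ≤ R K) :
    L ((K : ℝ)⁻¹ • ∑ k ∈ Finset.range K, xs (k + 1)) y -
        L x ((K : ℝ)⁻¹ • ∑ k ∈ Finset.range K, ys (k + 1)) ≤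
      1 / (K : ℝ) * (Q 0 - R K) ∧
    1 / (K : ℝ) * (Q 0 - R K) ≤ 1 / (K : ℝ) * (1 / τ₀ * DX + 1 / σ₀ * DY) := by
  have hKpos : (0 : ℝ) < (K : ℝ) := by exact_mod_cast hK
  have hKinv : (0 : ℝ) ≤ (K : ℝ)⁻¹ := by positivity
  -- telescoping sum bound
  have htel : ∀ n : ℕ, 1 ≤ n →
      ∑ k ∈ Finset.range n, (L (xs (k + 1)) y - L x (ys (k + 1))) ≤ Q 0 - R n := by
    intro n hn
    induction n with
    | zero => omega
    | succ m ih =>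
      rcases Nat.eq_or_lt_of_le hn with h1 | h1
      · simp only [← h1, Finset.sum_range_one]
        have := hiter 0
        have := hE 0
        linarith
      · have hm : 1 ≤ m := by omega
        rw [Finset.sum_range_succ]
        have h2 := ih hm
        have h3 := hiter m
        have h4 := hE m
        have h5 : Q m ≤ R m := by
          obtain ⟨m', rfl⟩ := Nat.exists_eq_add_of_le hm
          simpa [Nat.add_comm] using hQR m'
        linarith
  -- Jensen for convex part
  have hw : ∑ _k ∈ Finset.range K, (K : ℝ)⁻¹ = 1 := by
    rw [Finset.sum_const, Finset.card_range, nsmul_eq_mul, mul_inv_cancel₀ hKpos.ne']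
  have hjx : L ((K : ℝ)⁻¹ • ∑ k ∈ Finset.range K, xs (k + 1)) y ≤
      ∑ k ∈ Finset.range K, (K : ℝ)⁻¹ * L (xs (k + 1)) y := by
    rw [Finset.smul_sum]
    exact hconv.map_sum_le (fun _ _ => hKinv) hw (fun _ _ => Set.mem_univ _)
  have hjy : ∑ k ∈ Finset.range K, (K : ℝ)⁻¹ * L x (ys (k + 1)) ≤
      L x ((K : ℝ)⁻¹ • ∑ k ∈ Finset.range K, ys (k + 1)) := by
    rw [Finset.smul_sum]
    exact hconc.le_map_sum (fun _ _ => hKinv) hw (fun _ _ => Set.mem_univ _)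
  constructor
  · have hsum : ∑ k ∈ Finset.range K, (K : ℝ)⁻¹ * (L (xs (k + 1)) y - L x (ys (k + 1))) ≤
        (K : ℝ)⁻¹ * (Q 0 - R K) := by
      rw [← Finset.mul_sum]
      exact mul_le_mul_of_nonneg_left (htel K hK) hKinv
    have hsplit : ∑ k ∈ Finset.range K, (K : ℝ)⁻¹ * (L (xs (k + 1)) y - L x (ys (k + 1))) =
        (∑ k ∈ Finset.range K, (K : ℝ)⁻¹ * L (xs (k + 1)) y) -
        ∑ k ∈ Finset.range K, (K : ℝ)⁻¹ * L x (ys (k + 1)) := by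
      rw [← Finset.sum_sub_distrib]
      congr 1; ext k; ring
    rw [one_div]
    linarith [hsum, hsplit ▸ hsum]
  · rw [← hQ0]
    have : Q 0 - R K ≤ Q 0 := by linarith
    exact mul_le_mul_of_nonneg_left this (by positivity)
end
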